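/- Attaching fragments preserves the HD property at the root: let H be a hypergraph, λ_r ⊆ E(H) with |λ_r| ≤ k, let χ_r = ⋃λ_r, and let C₁,…,C_ℓ be the [χ_r]-components of (E(H), ∅, ∅). If for every i the extended subhypergraph (C_i, ∅, V(C_i) ∩ χ_r) admits an HD D_i of width ≤ k, then H admits an HD of width ≤ k, namely the tree with root r labelled (χ_r, λ_r) whose children are the roots of the D_i. -/

import Mathlib

open scoped Classical

/-- A hypergraph: a finite set of nonempty hyperedges over vertex type `V`. -/
structure HGraph (V : Type) [DecidableEq V] where
  edges : Finset (Finset V)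
  edge_nonempty : ∀ e ∈ edges, e.Nonempty

/-- The vertex set of a hypergraph: the union of its edges. -/
noncomputable def HGraph.verts {V : Type} [DecidableEq V] (H : HGraph V) :
    Finset V := H.edges.sup id

/-- An extended subhypergraph `(E', Sp, Con)` of a hypergraph `H`. -/
structure ExtSubHG {V : Type} [DecidableEq V] (H : HGraph V) where
  E : Finset (Finset V)
  Sp : Finset (Finset V)
  Con : Finset V
  E_subset : E ⊆ H.edges
  Sp_subset : ∀ s ∈ Sp, s ⊆ H.verts
  Con_subset : Con ⊆ H.verts

/-- The vertices of an extended subhypergraph: `V(H') = ⋃E' ∪ ⋃Sp`. -/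
noncomputable def ExtSubHG.verts {V : Type} [DecidableEq V] {H : HGraph V}
    (H' : ExtSubHG H) : Finset V := (H'.E ∪ H'.Sp).sup id

/-- A finite rooted tree, given by a parent function from which the root is reachable. -/
structure RTree (α : Type) where
  root : α
  parent : α → α
  parent_root : parent root = root
  reaches_root : ∀ u, ∃ k, parent^[k] u = root

namespace RTree

variable {α : Type}

/-- `u` is an ancestor of `w` (possibly `u = w`). -/
def isAnc (T : RTree α) (u w : α) : Prop := ∃ k, T.parent^[k] w = u

/-- `u` is a proper ancestor of `w`. -/
def properAnc (T : RTree α) (u w : α) : Prop := T.isAnc u w ∧ u ≠ w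

/-- `c` is a child of `u`. -/
def isChild (T : RTree α) (c u : α) : Prop := T.parent c = u ∧ c ≠ u

/-- The subtree `T_u` rooted at `u`: all descendants of `u` (including `u`). -/
noncomputable def subtree (T : RTree α) [Fintype α] (u : α) : Finset α :=
  Finset.univ.filter (fun w => T.isAnc u w)

/-- The part of the tree strictly above `u`: all nodes outside the subtree `T_u`. -/
noncomputable def outside (T : RTree α) [Fintype α] (u : α) : Finset α :=
  Finset.univ.filter (fun w => ¬ T.isAnc u w)

/-- `x` lies on the (unique) path between `u` and `w` in the tree `T`. -/
def onPath (T : RTree α) (u w x : α) : Prop :=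
  (T.isAnc x u ∨ T.isAnc x w) ∧ ∀ a, T.isAnc a u → T.isAnc a w → T.isAnc a x

/-- A set of nodes is connected in `T` if it is closed under taking paths. -/
def connectedIn (T : RTree α) (S : Set α) : Prop :=
  ∀ u ∈ S, ∀ w ∈ S, ∀ x, T.onPath u w x → x ∈ S

/-- `u` is a leaf of `T`. -/
def isLeaf (T : RTree α) (u : α) : Prop := ∀ c, ¬ T.isChild c u

end RTree

/-- `[U]`-adjacency on a set `F` of (possibly special) edges:
`f` and `g` are adjacent iff they share a vertex outside `U`. -/
def UAdj {V : Type} [DecidableEq V] (F : Finset (Finset V)) (U : Finset V)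
    (f g : Finset V) : Prop :=
  f ∈ F ∧ g ∈ F ∧ ((f ∩ g) \ U).Nonempty

/-- `[U]`-connectedness: the transitive closure of `[U]`-adjacency (note that this
relation is reflexive exactly on the edges `f ∈ F` with `f \ U ≠ ∅`). -/
def UConn {V : Type} [DecidableEq V] (F : Finset (Finset V)) (U : Finset V)
    (f g : Finset V) : Prop :=
  Relation.TransGen (UAdj F U) f g

/-- A `[U]`-component of `F`: a maximally `[U]`-connected subset of `F`. -/
def IsUComponent {V : Type} [DecidableEq V] (F : Finset (Finset V)) (U : Finset V)
    (C : Finset (Finset V)) : Prop :=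
  C ⊆ F ∧ C.Nonempty ∧ (∀ f ∈ C, ∀ g ∈ C, UConn F U f g) ∧
  ∀ C', C ⊂ C' → C' ⊆ F → ∃ f ∈ C', ∃ g ∈ C', ¬ UConn F U f g

/-- Conditions (1)–(6): `(T, χ, lam)` is a hypertree decomposition of the extended
subhypergraph `(E', Sp, Con)` of the hypergraph `H`. -/
structure IsHD {V α : Type} [DecidableEq V] (H : HGraph V)
    (E' Sp : Finset (Finset V)) (Con : Finset V)
    (T : RTree α) (χ : α → Finset V) (lam : α → Finset (Finset V)) : Prop where
  cond1 : ∀ u, (lam u ⊆ H.edges ∧ χ u ⊆ (lam u).sup id) ∨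
    (∃ s ∈ Sp, lam u = {s} ∧ χ u = s)
  cond2E : ∀ f ∈ E', ∃ u, f ⊆ χ u
  cond2Sp : ∀ f ∈ Sp, ∃ u, lam u = {f} ∧ χ u = f
  cond3 : ∀ v ∈ (E' ∪ Sp).sup id, T.connectedIn {u | v ∈ χ u}
  cond4 : ∀ u w, T.isAnc u w → χ w ∩ (lam u).sup id ⊆ χ u
  cond5 : ∀ u, (∃ s ∈ Sp, lam u = {s}) → T.isLeaf u
  cond6 : Con ⊆ χ T.root

/-- A classical hypertree decomposition of a hypergraph `H`
(Gottlob–Leone–Scarcello, conditions (1)–(4)). -/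
structure IsClassicalHD {V α : Type} [DecidableEq V] (H : HGraph V)
    (T : RTree α) (χ : α → Finset V) (lam : α → Finset (Finset V)) : Prop where
  cover : ∀ e ∈ H.edges, ∃ u, e ⊆ χ u
  conn : ∀ v ∈ H.verts, T.connectedIn {u | v ∈ χ u}
  lam_edges : ∀ u, lam u ⊆ H.edges
  chi_sub_lam : ∀ u, χ u ⊆ (lam u).sup id
  special : ∀ u w, T.isAnc u w → χ w ∩ (lam u).sup id ⊆ χ u

/-- `cov(u)`: the (special) edges of `E' ∪ Sp` covered for the first time at node `u`. -/
noncomputable def covAt {V α : Type} [DecidableEq V] (T : RTree α)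
    (χ : α → Finset V) (E' Sp : Finset (Finset V)) (u : α) : Finset (Finset V) :=
  (E' ∪ Sp).filter (fun f => f ⊆ χ u ∧ ∀ u', T.properAnc u' u → ¬ f ⊆ χ u')

/-- `cov(T')` for a set of nodes `T'`. -/
noncomputable def covTree {V α : Type} [DecidableEq V] (T : RTree α)
    (χ : α → Finset V) (E' Sp : Finset (Finset V)) (S : Finset α) :
    Finset (Finset V) :=
  S.biUnion (covAt T χ E' Sp)

/-- Node `u` is a balanced separator of the decomposition `(T, χ)` of `(E', Sp, _)`:
every child subtree covers at most `(|E'| + |Sp|)/2` (special) edges, and the part of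
the tree above `u` covers strictly fewer than `(|E'| + |Sp|)/2` (special) edges. -/
noncomputable def IsBalancedSep {V α : Type} [DecidableEq V] [Fintype α]
    (T : RTree α) (χ : α → Finset V) (E' Sp : Finset (Finset V)) (u : α) : Prop :=
  (∀ c, T.isChild c u →
      2 * (covTree T χ E' Sp (T.subtree c)).card ≤ E'.card + Sp.card) ∧
  2 * (covTree T χ E' Sp (T.outside u)).card < E'.card + Sp.card

/-- The normal form of HDs of extended subhypergraphs (Definition: for every parent `p`
with child `c`, (1) `cov(T_c)` is a `[χ(p)]`-component; (2) some edge of it is covered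
at `c`; (3) `χ(c) = ⋃λ(c) ∩ ⋃cov(T_c)`). -/
noncomputable def IsNormalForm {V α : Type} [DecidableEq V] [Fintype α]
    (E' Sp : Finset (Finset V))
    (T : RTree α) (χ : α → Finset V) (lam : α → Finset (Finset V)) : Prop :=
  ∀ p c, T.isChild c p →
    IsUComponent (E' ∪ Sp) (χ p) (covTree T χ E' Sp (T.subtree c)) ∧
    (∃ f ∈ covTree T χ E' Sp (T.subtree c), f ⊆ χ c) ∧
    χ c = (lam c).sup id ∩ (covTree T χ E' Sp (T.subtree c)).sup id

/-!
Hang the decompositions `D_C` of the components below a new root `r` with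
`χ(r) = ⋃λ_r`, after cutting every bag of `D_C` down to `V(C)`. For a vertex `v`, the nodes
whose bags contain `v` stay connected: two distinct components meet only inside `⋃λ_r`, so
if `v` occurs in two fragments then `v ∈ χ(r)`, and a vertex of `V(C) ∩ χ(r)` lies in the root
bag of `D_C` because `Con ⊆ χ(root)`.
-/

theorem Equiv.conj_iterate_apply {α β : Type} (e : α ≃ β) (f : α → α) (k : ℕ) (a : α) :
    (e.conj f)^[k] (e a) = e (f^[k] a) :=
  (Function.Semiconj.iterate_right (f := e) (fun x => by simp [Equiv.conj_apply]) k a).symm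

namespace RTree

variable {α β : Type}

theorem isAnc_refl (T : RTree α) (u : α) : T.isAnc u u := ⟨0, rfl⟩

theorem isAnc_root (T : RTree α) (u : α) : T.isAnc T.root u := T.reaches_root u

theorem eq_root_of_isAnc_root {T : RTree α} {u : α} (h : T.isAnc u T.root) : u = T.root := by
  obtain ⟨k, hk⟩ := h
  rwa [Function.iterate_fixed T.parent_root, eq_comm] at hk

theorem onPath_root {T : RTree α} {u x : α} (h : T.isAnc x u) : T.onPath u T.root x := by
  refine ⟨Or.inl h, fun a _ ha => ?_⟩
  rw [eq_root_of_isAnc_root ha]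
  exact T.isAnc_root x

theorem connectedIn_of_isAnc_left {T : RTree α} {S : Set α}
    (h : ∀ u ∈ S, ∀ w ∈ S, ∀ x, T.isAnc x u →
      (∀ a, T.isAnc a u → T.isAnc a w → T.isAnc a x) → x ∈ S) :
    T.connectedIn S := by
  rintro u hu w hw x ⟨hx | hx, hcommon⟩
  · exact h u hu w hw x hx hcommon
  · exact h w hw u hu x hx fun a hw hu => hcommon a hu hw

def relabel (T : RTree α) (e : α ≃ β) : RTree β where
  root := e T.root
  parent := e.conj T.parent
  parent_root := by simp [Equiv.conj_apply, T.parent_root]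
  reaches_root b := by
    obtain ⟨k, hk⟩ := T.reaches_root (e.symm b)
    exact ⟨k, by rw [← e.apply_symm_apply b, e.conj_iterate_apply, hk]⟩

theorem relabel_isAnc (T : RTree α) (e : α ≃ β) (x y : β) :
    (T.relabel e).isAnc x y ↔ T.isAnc (e.symm x) (e.symm y) := by
  refine exists_congr fun k => ?_
  rw [← e.apply_symm_apply y, relabel, e.conj_iterate_apply, ← e.eq_symm_apply,
    e.symm_apply_apply]

theorem relabel_onPath (T : RTree α) (e : α ≃ β) (x y z : β) :
    (T.relabel e).onPath x y z ↔ T.onPath (e.symm x) (e.symm y) (e.symm z) := by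
  simp only [onPath, relabel_isAnc, e.symm.forall_congr_left, Equiv.symm_symm,
    Equiv.symm_apply_apply]

theorem connectedIn.relabel {T : RTree α} {S : Set α} (h : T.connectedIn S) (e : α ≃ β) :
    (T.relabel e).connectedIn (e.symm ⁻¹' S) :=
  fun u hu w hw x hx => h _ hu _ hw _ ((T.relabel_onPath e u w x).mp hx)

end RTree

section Relabel

variable {V α β : Type} [DecidableEq V] {H : HGraph V} {T : RTree α} {χ : α → Finset V}
  {lam : α → Finset (Finset V)}

theorem IsClassicalHD.relabel (h : IsClassicalHD H T χ lam) (e : α ≃ β) :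
    IsClassicalHD H (T.relabel e) (χ ∘ e.symm) (lam ∘ e.symm) where
  cover f hf := by
    obtain ⟨u, hu⟩ := h.cover f hf
    exact ⟨e u, by simpa using hu⟩
  conn v hv := (h.conn v hv).relabel e
  lam_edges u := h.lam_edges (e.symm u)
  chi_sub_lam u := h.chi_sub_lam (e.symm u)
  special u w hanc := h.special (e.symm u) (e.symm w) ((T.relabel_isAnc e u w).mp hanc)

theorem IsClassicalHD.exists_fin [Fintype α] {k : ℕ} (h : IsClassicalHD H T χ lam)
    (hwidth : ∀ u, (lam u).card ≤ k) :
    ∃ (n : ℕ) (T' : RTree (Fin n)) (χ' : Fin n → Finset V) (lam' : Fin n → Finset (Finset V)),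
      IsClassicalHD H T' χ' lam' ∧ ∀ u, (lam' u).card ≤ k :=
  let e := Fintype.equivFin α
  ⟨_, T.relabel e, χ ∘ e.symm, lam ∘ e.symm, h.relabel e, fun u => hwidth (e.symm u)⟩

end Relabel

section Attach

variable {κ : Type} {β : κ → Type} (T : ∀ C, RTree (β C))

noncomputable def attachParent : Option ((C : κ) × β C) → Option ((C : κ) × β C)
  | none => none
  | some ⟨C, u⟩ => if u = (T C).root then none else some ⟨C, (T C).parent u⟩

theorem attachParent_iterate_none (k : ℕ) : (attachParent T)^[k] none = none :=
  Function.iterate_fixed rfl k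

theorem attachParent_iterate_some {k : ℕ} {C : κ} {a : β C} {y : (C : κ) × β C}
    (h : (attachParent T)^[k] (some ⟨C, a⟩) = some y) : y = ⟨C, (T C).parent^[k] a⟩ := by
  induction k generalizing a with
  | zero => simpa [eq_comm] using h
  | succ k ih =>
    rw [Function.iterate_succ_apply, attachParent] at h
    split_ifs at h with hroot
    · simp [attachParent_iterate_none] at h
    · rw [ih h, Function.iterate_succ_apply]

/-- The tree with a new root `none` whose children are the roots of the trees `T C`. -/
noncomputable def attachTree : RTree (Option ((C : κ) × β C)) where
  root := none
  parent := attachParent T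
  parent_root := rfl
  reaches_root := by
    rintro (_ | ⟨C, u⟩)
    · exact ⟨0, rfl⟩
    obtain ⟨k, hk⟩ := (T C).reaches_root u
    induction k generalizing u with
    | zero => exact ⟨1, by simpa [attachParent] using hk⟩
    | succ k ih =>
      by_cases hroot : u = (T C).root
      · exact ⟨1, by simp [attachParent, hroot]⟩
      obtain ⟨m, hm⟩ := ih ((T C).parent u) hk
      exact ⟨m + 1, by rw [Function.iterate_succ_apply, ← hm]; simp [attachParent, hroot]⟩

variable {T}

theorem attachTree_not_isAnc_some_none (y : (C : κ) × β C) :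
    ¬ (attachTree T).isAnc (some y) none := by
  rintro ⟨k, hk⟩
  rw [attachTree, attachParent_iterate_none] at hk
  cases hk

theorem fst_eq_of_attachTree_isAnc {C D : κ} {a : β C} {b : β D}
    (h : (attachTree T).isAnc (some ⟨C, a⟩) (some ⟨D, b⟩)) : C = D := by
  obtain ⟨k, hk⟩ := h
  exact (Sigma.mk.inj_iff.mp (attachParent_iterate_some T hk)).1

theorem attachTree_isAnc_iff {C : κ} {a b : β C} :
    (attachTree T).isAnc (some ⟨C, a⟩) (some ⟨C, b⟩) ↔ (T C).isAnc a b := by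
  constructor
  · rintro ⟨k, hk⟩
    exact ⟨k, (eq_of_heq (Sigma.mk.inj_iff.mp (attachParent_iterate_some T hk)).2).symm⟩
  · rintro ⟨k, rfl⟩
    induction k generalizing b with
    | zero => exact RTree.isAnc_refl _ _
    | succ k ih =>
      by_cases hroot : b = (T C).root
      · rw [hroot, Function.iterate_fixed (T C).parent_root]
        exact RTree.isAnc_refl _ _
      obtain ⟨m, hm⟩ := ih (b := (T C).parent b)
      refine ⟨m + 1, ?_⟩
      rw [Function.iterate_succ_apply, Function.iterate_succ_apply]
      simpa [attachTree, attachParent, hroot] using hm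

theorem attachTree_connectedIn {S : Set (Option ((C : κ) × β C))}
    (hS : ∀ C, (T C).connectedIn {u | some ⟨C, u⟩ ∈ S})
    (hroot : none ∈ S → ∀ C u, some ⟨C, u⟩ ∈ S → some ⟨C, (T C).root⟩ ∈ S)
    (hsep : ∀ C D a b, C ≠ D → some ⟨C, a⟩ ∈ S → some ⟨D, b⟩ ∈ S → none ∈ S) :
    (attachTree T).connectedIn S := by
  refine RTree.connectedIn_of_isAnc_left fun u hu w hw x hxu hcommon => ?_
  rcases x with _ | ⟨E, c⟩
  · rcases u with _ | ⟨C, a⟩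
    · exact hu
    rcases w with _ | ⟨D, b⟩
    · exact hw
    by_cases hCD : C = D
    · subst hCD
      exact absurd (hcommon _ (attachTree_isAnc_iff.mpr ((T C).isAnc_root a))
        (attachTree_isAnc_iff.mpr ((T C).isAnc_root b))) (attachTree_not_isAnc_some_none _)
    · exact hsep C D a b hCD hu hw
  rcases u with _ | ⟨C, a⟩
  · exact absurd hxu (attachTree_not_isAnc_some_none _)
  obtain rfl := fst_eq_of_attachTree_isAnc hxu
  have hca := attachTree_isAnc_iff.mp hxu
  have via_root : none ∈ S → some ⟨E, c⟩ ∈ S := fun h =>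
    hS E a hu _ (hroot h E a hu) c (RTree.onPath_root hca)
  rcases w with _ | ⟨D, b⟩
  · exact via_root hw
  by_cases hED : E = D
  · subst hED
    refine hS E a hu b hw c ⟨Or.inl hca, fun z hza hzb => ?_⟩
    exact attachTree_isAnc_iff.mp
      (hcommon _ (attachTree_isAnc_iff.mpr hza) (attachTree_isAnc_iff.mpr hzb))
  · exact via_root (hsep E D a b hED hu hw)

def attachBag {γ : Type} (r : γ) (b : ∀ C, β C → γ) : Option ((C : κ) × β C) → γ
  | none => r
  | some ⟨C, u⟩ => b C u

theorem forall_attachBag {γ : Type} {P : γ → Prop} {r : γ} {b : ∀ C, β C → γ}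
    (hr : P r) (hb : ∀ C u, P (b C u)) : ∀ x, P (attachBag r b x)
  | none => hr
  | some ⟨C, u⟩ => hb C u

end Attach

theorem IsClassicalHD.attach {V κ : Type} [DecidableEq V] {β : κ → Type} {H : HGraph V}
    {T : ∀ C, RTree (β C)} {χ : ∀ C, β C → Finset V} {lam : ∀ C, β C → Finset (Finset V)}
    {lam_r : Finset (Finset V)} (hlam_r : lam_r ⊆ H.edges)
    (hlam : ∀ C u, lam C u ⊆ H.edges) (hχ : ∀ C u, χ C u ⊆ (lam C u).sup id)
    (hspecial : ∀ C u w, (T C).isAnc u w → χ C w ∩ (lam C u).sup id ⊆ χ C u)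
    (hconn : ∀ C v, (T C).connectedIn {u | v ∈ χ C u})
    (hroot : ∀ C u v, v ∈ χ C u → v ∈ lam_r.sup id → v ∈ χ C (T C).root)
    (hsep : ∀ C D a b v, C ≠ D → v ∈ χ C a → v ∈ χ D b → v ∈ lam_r.sup id)
    (hcover : ∀ e ∈ H.edges, e ⊆ lam_r.sup id ∨ ∃ C u, e ⊆ χ C u) :
    IsClassicalHD H (attachTree T) (attachBag (lam_r.sup id) χ) (attachBag lam_r lam) where
  cover e he := by
    rcases hcover e he with h | ⟨C, u, h⟩
    · exact ⟨none, h⟩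
    · exact ⟨some ⟨C, u⟩, h⟩
  conn v _ := attachTree_connectedIn (hconn · v) (fun hv C u hu => hroot C u v hu hv)
    (fun C D a b hCD ha hb => hsep C D a b v hCD ha hb)
  lam_edges := forall_attachBag (P := (· ⊆ H.edges)) hlam_r hlam
  chi_sub_lam := by
    rintro (_ | ⟨C, u⟩)
    · exact subset_rfl
    · exact hχ C u
  special := by
    rintro (_ | ⟨C, a⟩) w hanc
    · exact Finset.inter_subset_right
    rcases w with _ | ⟨D, b⟩
    · exact absurd hanc (attachTree_not_isAnc_some_none _)
    obtain rfl := fst_eq_of_attachTree_isAnc hanc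
    exact hspecial C a b (attachTree_isAnc_iff.mp hanc)

section Components

variable {V : Type} [DecidableEq V] {F : Finset (Finset V)} {U : Finset V}

theorem UAdj.symm {f g : Finset V} (h : UAdj F U f g) : UAdj F U g f :=
  ⟨h.2.1, h.1, by rw [Finset.inter_comm]; exact h.2.2⟩

instance : Std.Symm (UAdj F U) := ⟨fun _ _ => UAdj.symm⟩

theorem UConn.symm {f g : Finset V} (h : UConn F U f g) : UConn F U g f :=
  Std.Symm.symm (r := Relation.TransGen (UAdj F U)) f g h

theorem IsUComponent.mem_of_uConn {C : Finset (Finset V)} {f g : Finset V}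
    (hC : IsUComponent F U C) (hf : f ∈ C) (hg : g ∈ F) (hfg : UConn F U f g) : g ∈ C := by
  by_contra hgC
  have hconn : ∀ p ∈ insert g C, UConn F U f p := by
    simp only [Finset.mem_insert, forall_eq_or_imp]
    exact ⟨hfg, hC.2.2.1 f hf⟩
  obtain ⟨p, hp, q, hq, hpq⟩ :=
    hC.2.2.2 _ (Finset.ssubset_insert hgC) (Finset.insert_subset hg hC.1)
  exact hpq ((hconn p hp).symm.trans (hconn q hq))

theorem exists_isUComponent_mem {f : Finset V} (hf : f ∈ F) (hfU : (f \ U).Nonempty) :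
    ∃ C, IsUComponent F U C ∧ f ∈ C := by
  have hff : f ∈ F.filter (UConn F U f) :=
    Finset.mem_filter.mpr ⟨hf, .single ⟨hf, hf, by rwa [Finset.inter_self]⟩⟩
  refine ⟨F.filter (UConn F U f), ⟨Finset.filter_subset _ _, ⟨f, hff⟩, ?_, ?_⟩, hff⟩
  · intro g hg h hh
    exact (Finset.mem_filter.mp hg).2.symm.trans (Finset.mem_filter.mp hh).2
  · intro C' hC' hC'F
    obtain ⟨g, hg, hgf⟩ := Finset.exists_of_ssubset hC'
    exact ⟨f, hC'.1 hff, g, hg, fun hfg => hgf (Finset.mem_filter.mpr ⟨hC'F hg, hfg⟩)⟩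

theorem IsUComponent.subset_of_uAdj {C D : Finset (Finset V)} {f g : Finset V}
    (hC : IsUComponent F U C) (hD : IsUComponent F U D) (hf : f ∈ C) (hg : g ∈ D)
    (hfg : UAdj F U f g) : C ⊆ D :=
  fun h hh => hD.mem_of_uConn hg (hC.1 hh) (.head hfg.symm (hC.2.2.1 f hf h hh))

theorem IsUComponent.sup_inter_sup_subset {C D : Finset (Finset V)}
    (hC : IsUComponent F U C) (hD : IsUComponent F U D) (hCD : C ≠ D) :
    C.sup id ∩ D.sup id ⊆ U := by
  intro v hv
  by_contra hvU
  obtain ⟨f, hf, hvf⟩ := Finset.mem_sup.mp (Finset.mem_inter.mp hv).1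
  obtain ⟨g, hg, hvg⟩ := Finset.mem_sup.mp (Finset.mem_inter.mp hv).2
  have hfg : UAdj F U f g := ⟨hC.1 hf, hD.1 hg, v,
    Finset.mem_sdiff.mpr ⟨Finset.mem_inter.mpr ⟨hvf, hvg⟩, hvU⟩⟩
  exact hCD ((hC.subset_of_uAdj hD hf hg hfg).antisymm (hD.subset_of_uAdj hC hg hf hfg.symm))

theorem subset_or_exists_isUComponent_mem {f : Finset V} (hf : f ∈ F) :
    f ⊆ U ∨ ∃ C, IsUComponent F U C ∧ f ∈ C := by
  rcases (f \ U).eq_empty_or_nonempty with h | h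
  · exact .inl (Finset.sdiff_eq_empty_iff_subset.mp h)
  · exact .inr (exists_isUComponent_mem hf h)

end Components

section Fragment

variable {V α : Type} [DecidableEq V] {H : HGraph V} {E : Finset (Finset V)} {Con : Finset V}
  {T : RTree α} {χ : α → Finset V} {lam : α → Finset (Finset V)}

theorem IsHD.lam_subset_and_bag_subset (h : IsHD H E ∅ Con T χ lam) (u : α) :
    lam u ⊆ H.edges ∧ χ u ⊆ (lam u).sup id :=
  (h.cond1 u).resolve_right (by simp)

theorem IsHD.connectedIn_inter_sup (h : IsHD H E ∅ Con T χ lam) (v : V) :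
    T.connectedIn {u | v ∈ χ u ∩ E.sup id} := by
  intro u hu w hw x hx
  simp only [Set.mem_ofPred_eq, Finset.mem_inter] at hu hw ⊢
  exact ⟨h.cond3 v (by simpa using hu.2) u hu.1 w hw.1 x hx, hu.2⟩

theorem IsHD.special_inter_sup (h : IsHD H E ∅ Con T χ lam) {u w : α} (huw : T.isAnc u w) :
    χ w ∩ E.sup id ∩ (lam u).sup id ⊆ χ u ∩ E.sup id := by
  intro v hv
  simp only [Finset.mem_inter] at hv ⊢
  exact ⟨h.cond4 u w huw (Finset.mem_inter.mpr ⟨hv.1.1, hv.2⟩), hv.1.2⟩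

end Fragment

theorem attach_fragments_at_root_general {V : Type} [DecidableEq V]
    (H : HGraph V) (k : ℕ)
    (lam_r : Finset (Finset V)) (hsub : lam_r ⊆ H.edges) (hcard : lam_r.card ≤ k)
    (hfrag : ∀ C : Finset (Finset V), IsUComponent H.edges (lam_r.sup id) C →
      ∃ (n : ℕ) (T : RTree (Fin n)) (χ : Fin n → Finset V)
        (lam : Fin n → Finset (Finset V)),
        IsHD H C ∅ (C.sup id ∩ lam_r.sup id) T χ lam ∧ ∀ u, (lam u).card ≤ k) :
    ∃ (n : ℕ) (T : RTree (Fin n)) (χ : Fin n → Finset V)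
      (lam : Fin n → Finset (Finset V)),
      IsClassicalHD H T χ lam ∧ ∀ u, (lam u).card ≤ k := by
  let comps := H.edges.powerset.filter (IsUComponent H.edges (lam_r.sup id))
  have hcomp (C : comps) : IsUComponent H.edges (lam_r.sup id) C :=
    (Finset.mem_filter.mp C.2).2
  choose n T χ lam hHD hwidth using fun C : comps => hfrag C (hcomp C)
  have hroot (C : comps) (u : Fin (n C)) (v : V) (hv : v ∈ χ C u ∩ C.1.sup id)
      (hvr : v ∈ lam_r.sup id) : v ∈ χ C (T C).root ∩ C.1.sup id := by
    have hvC := (Finset.mem_inter.mp hv).2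
    exact Finset.mem_inter.mpr ⟨(hHD C).cond6 (Finset.mem_inter.mpr ⟨hvC, hvr⟩), hvC⟩
  have hsep (C D : comps) (a : Fin (n C)) (b : Fin (n D)) (v : V) (hCD : C ≠ D)
      (ha : v ∈ χ C a ∩ C.1.sup id) (hb : v ∈ χ D b ∩ D.1.sup id) : v ∈ lam_r.sup id :=
    (hcomp C).sup_inter_sup_subset (hcomp D) (Subtype.coe_injective.ne hCD)
      (Finset.mem_inter.mpr ⟨(Finset.mem_inter.mp ha).2, (Finset.mem_inter.mp hb).2⟩)
  have hcover (e : Finset V) (he : e ∈ H.edges) :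
      e ⊆ lam_r.sup id ∨ ∃ (C : comps) (u : Fin (n C)), e ⊆ χ C u ∩ C.1.sup id := by
    refine (subset_or_exists_isUComponent_mem he).imp_right fun ⟨C, hC, heC⟩ => ?_
    have hCmem : C ∈ comps := Finset.mem_filter.mpr ⟨Finset.mem_powerset.mpr hC.1, hC⟩
    obtain ⟨u, hu⟩ := (hHD ⟨C, hCmem⟩).cond2E e heC
    exact ⟨⟨C, hCmem⟩, u, Finset.subset_inter hu (Finset.le_sup (f := id) heC)⟩
  have hglued := IsClassicalHD.attach hsub
    (fun C u => ((hHD C).lam_subset_and_bag_subset u).1)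
    (fun C u => Finset.inter_subset_left.trans ((hHD C).lam_subset_and_bag_subset u).2)
    (fun C _ _ => (hHD C).special_inter_sup) (fun C => (hHD C).connectedIn_inter_sup)
    hroot hsep hcover
  exact hglued.exists_fin (forall_attachBag (P := fun l : Finset (Finset V) => l.card ≤ k)
    hcard hwidth)

/-- attaching fragments preserves the HD property at the root: if every
`[⋃λ_r]`-component `C` of `(E(H), ∅, ∅)` admits an HD of width `≤ k` of
`(C, ∅, V(C) ∩ ⋃λ_r)`, then `H` admits a (classical) HD of width `≤ k`. -/
theorem attach_fragments_at_root {V : Type} [DecidableEq V]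
    (H : HGraph V) (k : ℕ) (hk : 1 ≤ k)
    (lam_r : Finset (Finset V)) (hsub : lam_r ⊆ H.edges) (hcard : lam_r.card ≤ k)
    (hfrag : ∀ C : Finset (Finset V), IsUComponent H.edges (lam_r.sup id) C →
      ∃ (n : ℕ) (T : RTree (Fin n)) (χ : Fin n → Finset V)
        (lam : Fin n → Finset (Finset V)),
        IsHD H C ∅ (C.sup id ∩ lam_r.sup id) T χ lam ∧ ∀ u, (lam u).card ≤ k) :
    ∃ (n : ℕ) (T : RTree (Fin n)) (χ : Fin n → Finset V)
      (lam : Fin n → Finset (Finset V)),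
      IsClassicalHD H T χ lam ∧ ∀ u, (lam u).card ≤ k :=
  attach_fragments_at_root_general H k lam_r hsub hcard hfrag
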